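/- arXiv:1112.2801 — 5 statements merged into one kernel-verified Lean document; each statement's English description precedes it below -/
import Mathlib

section
/- Every better elastic set system is a finitely elastic set system: if qo(𝓛) is a BQO (in particular, a WQO), then 𝓛 admits no infinite bad learning sequence. -/
/-- `(t, A)` is a bad learning sequence of `𝓛`: the pair `⟨t i, A (i + 1)⟩` of the paper is
`⟨t i, A i⟩` here. -/
def IsBadLearningSeq {T : Type*} (𝓛 : Set (Set T)) (t : ℕ → T) (A : ℕ → Set T) : Prop :=
  ∀ i, A i ∈ 𝓛 ∧ (∀ j ≤ i, t j ∈ A i) ∧ t (i + 1) ∉ A i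

namespace IsBadLearningSeq

variable {T : Type*} {𝓛 : Set (Set T)} {t : ℕ → T} {A : ℕ → Set T}

theorem mem_sUnion (h : IsBadLearningSeq 𝓛 t A) (n : ℕ) : t n ∈ ⋃₀ 𝓛 :=
  ⟨A n, (h n).1, (h n).2.1 n le_rfl⟩

/-- A bad learning sequence is a bad sequence for `qo(𝓛)`. -/
theorem exists_mem_not_mem (h : IsBadLearningSeq 𝓛 t A) {i j : ℕ} (hij : i < j) :
    ∃ L ∈ 𝓛, t i ∈ L ∧ t j ∉ L := by
  obtain ⟨k, rfl⟩ := Nat.exists_eq_add_of_lt hij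
  exact ⟨A (i + k), (h _).1, (h _).2.1 i (Nat.le_add_right i k), (h _).2.2⟩

end IsBadLearningSeq

/-- Every better elastic set system is finitely elastic: if `qo(𝓛)` is a WQO
(in particular if it is a BQO), then `𝓛` admits no infinite bad learning sequence. -/
theorem bess_is_fess {T : Type*} (𝓛 : Set (Set T))
    (hwqo : ∀ f : ℕ → T, (∀ n, f n ∈ ⋃₀ 𝓛) →
      ∃ i j, i < j ∧ ∀ L ∈ 𝓛, f i ∈ L → f j ∈ L) :
    ¬ ∃ (t : ℕ → T) (A : ℕ → Set T),
      ∀ i, A i ∈ 𝓛 ∧ (∀ j ≤ i, t j ∈ A i) ∧ t (i + 1) ∉ A i := by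
  rintro ⟨t, A, hbad⟩
  change IsBadLearningSeq 𝓛 t A at hbad
  obtain ⟨i, j, hij, hle⟩ := hwqo t hbad.mem_sUnion
  obtain ⟨L, hL, hi, hj⟩ := hbad.exists_mem_not_mem hij
  exact hj (hle L hL hi)
end

section
/- If qo(𝓛) is a WQO for a set system 𝓛, then every infinite sequence in 𝓛̂ = {⋃𝓜 : ∅ ≠ 𝓜 ⊆ 𝓛} admits no infinite bad learning sequence; i.e., the closure of 𝓛 under arbitrary nonempty unions is a finitely elastic set system. -/
/-! A union of members of `𝓛` is upward closed for the quasi-order `⪯_𝓛`. So in a bad learning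
sequence for `𝓛̂`, a pair `t i ⪯_𝓛 t j` with `i < j` is impossible: `t i ∈ A (j - 1)` would force
`t j ∈ A (j - 1)`. Since every `t n` lies in `⋃₀ 𝓛`, the WQO hypothesis supplies such a pair. -/

theorem Set.mem_sUnion_of_subset_of_le {T : Type*} {𝓛 𝓜 : Set (Set T)} (h𝓜 : 𝓜 ⊆ 𝓛) {x y : T}
    (hxy : ∀ L ∈ 𝓛, x ∈ L → y ∈ L) (hx : x ∈ ⋃₀ 𝓜) : y ∈ ⋃₀ 𝓜 := by
  obtain ⟨L, hL, hxL⟩ := hx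
  exact ⟨L, hL, hxy L (h𝓜 hL) hxL⟩

/-- If `qo(𝓛)` is a WQO, then `𝓛̂ = {⋃𝓜 : ∅ ≠ 𝓜 ⊆ 𝓛}`, the closure of `𝓛` under
arbitrary nonempty unions, admits no infinite bad learning sequence. -/
theorem hatL_fess_of_wqo {T : Type*} (𝓛 : Set (Set T))
    (hwqo : ∀ f : ℕ → T, (∀ n, f n ∈ ⋃₀ 𝓛) →
      ∃ i j, i < j ∧ ∀ L ∈ 𝓛, f i ∈ L → f j ∈ L) :
    ¬ ∃ (t : ℕ → T) (A : ℕ → Set T),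
      ∀ i, (A i ∈ {U : Set T | ∃ 𝓜 : Set (Set T), 𝓜 ⊆ 𝓛 ∧ 𝓜.Nonempty ∧ U = ⋃₀ 𝓜}) ∧
        (∀ j ≤ i, t j ∈ A i) ∧ t (i + 1) ∉ A i := by
  rintro ⟨t, A, hA⟩
  choose 𝓜 h𝓜 _ hA_eq using fun i ↦ (hA i).1
  have ht : ∀ n, t n ∈ ⋃₀ 𝓛 := fun n ↦
    Set.sUnion_mono (h𝓜 n) (hA_eq n ▸ (hA n).2.1 n le_rfl)
  obtain ⟨i, j, hij, hle⟩ := hwqo t ht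
  obtain ⟨k, rfl⟩ := Nat.exists_eq_add_of_lt hij
  have hti : t i ∈ ⋃₀ 𝓜 (i + k) := hA_eq _ ▸ (hA (i + k)).2.1 i (Nat.le_add_right i k)
  exact (hA (i + k)).2.2 (hA_eq _ ▸ Set.mem_sUnion_of_subset_of_le (h𝓜 _) hle hti)
end

section
/- For the set system 𝓛₁ = { {i} ∪ {k : k ≥ j} : i, j ∈ ℕ } over ℕ, the induced quasi-ordering qo(𝓛₁) equals equality on ℕ, and hence is not a WQO. -/
/-!
A point `x` lies in the set `{x} ∪ {k | y + 1 ≤ k}` of `𝓛₁`, which misses every `y ≠ x`; so `𝓛₁`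
separates points and `x ⪯ y` forces `x = y`. An injective sequence is then a bad sequence.
-/

theorem forall_mem_imp_mem_iff_eq_of_separating {α : Type*} {𝓛 : Set (Set α)}
    (hsep : ∀ x y, x ≠ y → ∃ L ∈ 𝓛, x ∈ L ∧ y ∉ L) (x y : α) :
    (∀ L ∈ 𝓛, x ∈ L → y ∈ L) ↔ x = y := by
  refine ⟨fun hxy => ?_, fun hxy L _ hx => hxy ▸ hx⟩
  by_contra hne
  obtain ⟨L, hL, hx, hy⟩ := hsep x y hne
  exact hy (hxy L hL hx)

theorem exists_singleton_union_Ici_separating {x y : ℕ} (hne : x ≠ y) :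
    ∃ L ∈ {L : Set ℕ | ∃ i j : ℕ, L = {i} ∪ {k | j ≤ k}}, x ∈ L ∧ y ∉ L :=
  ⟨{x} ∪ {k | y + 1 ≤ k}, ⟨x, y + 1, rfl⟩, Or.inl rfl, by simp [Ne.symm hne]⟩

theorem not_forall_exists_lt_apply_eq {α : Type*} [Infinite α] :
    ¬ ∀ f : ℕ → α, ∃ i j, i < j ∧ f i = f j := fun h => by
  obtain ⟨i, j, hij, hf⟩ := h (Infinite.natEmbedding α)
  exact hij.ne ((Infinite.natEmbedding α).injective hf)

/-- For `𝓛₁ = { {i} ∪ {k : k ≥ j} : i, j ∈ ℕ }`, the induced quasi-ordering `qo(𝓛₁)` is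
equality on `ℕ`, hence not a WQO. -/
theorem qo_L1_is_equality :
    (∀ x y : ℕ,
      (∀ L ∈ {L : Set ℕ | ∃ i j : ℕ, L = {i} ∪ {k | j ≤ k}}, x ∈ L → y ∈ L) ↔ x = y) ∧
      ¬ ∀ f : ℕ → ℕ, ∃ i j, i < j ∧
        ∀ L ∈ {L : Set ℕ | ∃ i j : ℕ, L = {i} ∪ {k | j ≤ k}}, f i ∈ L → f j ∈ L := by
  have qo_iff_eq := forall_mem_imp_mem_iff_eq_of_separating
    fun _ _ => exists_singleton_union_Ici_separating
  refine ⟨qo_iff_eq, ?_⟩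
  simpa only [qo_iff_eq] using not_forall_exists_lt_apply_eq (α := ℕ)
end

section
/- Let F : {(i,j) : i < j, i,j ∈ ℕ} → P(ℕ) be defined by F(i,j) = {i} ∪ {k : k > j}. Then the family 𝓛₁ ordered by reverse inclusion fails the Rado condition: F(i,j) ⊋ F(i,j+1) for all i < j, but there are no i < j < k with F(i,j) ⊋ F(j,k); in particular, the partial ordering ({F(i,j) : i<j}, ⊇) is not a BQO via the ω²-WQO characterization. -/
open Set

section

variable {α : Type*} [Preorder α] {a b c : α}

theorem singleton_union_Ioi_ssubset_of_lt (hbc : b < c) (hac : a ≠ c) :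
    {a} ∪ Ioi c ⊂ {a} ∪ Ioi b := by
  refine (ssubset_iff_of_subset (union_subset_union_right _ (Ioi_subset_Ioi hbc.le))).2
    ⟨c, Or.inr hbc, ?_⟩
  rintro (hca | hcc)
  · exact hac hca.symm
  · exact lt_irrefl c hcc

theorem not_singleton_union_Ioi_subset (hab : a ≠ b) : ¬ {b} ∪ Ioi c ⊆ {a} ∪ Ioi b := by
  intro h
  rcases h (Or.inl rfl) with hba | hbb
  · exact hab hba.symm
  · exact lt_irrefl b hbb

end

/-- With `F i j = {i} ∪ {k : k > j}` for `i < j`: (a) `F i j ⊋ F i (j+1)` for all `i < j`,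
and (b) there are no `i < j < k` with `F i j ⊇ F j k`; the Rado counterexample. -/
theorem rado_counterexample :
    (∀ i j : ℕ, i < j →
      (({i} ∪ {k | j + 1 < k} : Set ℕ) ⊂ ({i} ∪ {k | j < k} : Set ℕ))) ∧
      ∀ i j k : ℕ, i < j → j < k →
        ¬ (({j} ∪ {m | k < m} : Set ℕ) ⊆ ({i} ∪ {m | j < m} : Set ℕ)) :=
  ⟨fun _ j hij => singleton_union_Ioi_ssubset_of_lt j.lt_succ_self (hij.trans j.lt_succ_self).ne,
    fun _ _ _ hij _ => not_singleton_union_Ioi_subset hij.ne⟩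
end

section
/- For an FESS 𝓛, 𝓛 has no infinite antichain with respect to set inclusion if and only if (𝓛, ⊇) is a WQO. -/
theorem exists_isBadLearningSeq_of_strictMono {T : Type*} {𝓛 : Set (Set T)} {L : ℕ → Set T}
    (hL𝓛 : ∀ n, L n ∈ 𝓛) (hL : StrictMono L) :
    ∃ t, IsBadLearningSeq 𝓛 t (fun i => L (i + 1)) := by
  choose t ht using fun i => Set.nonempty_of_ssubset (hL (Nat.lt_succ_self i))
  refine ⟨t, fun i => ⟨hL𝓛 _, fun j hj => ?_, (ht (i + 1)).2⟩⟩
  exact hL.monotone (Nat.succ_le_succ hj) (ht j).1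

theorem exists_lt_and_le_of_not_exists_strictMono_of_not_exists_antichain {α : Type*}
    [PartialOrder α] {s : Set α}
    (hchain : ¬ ∃ f : ℕ → α, (∀ n, f n ∈ s) ∧ StrictMono f)
    (hanti : ¬ ∃ f : ℕ → α, (∀ n, f n ∈ s) ∧ ∀ i j, i ≠ j → ¬ f i ≤ f j)
    (f : ℕ → α) (hf : ∀ n, f n ∈ s) : ∃ i j, i < j ∧ f j ≤ f i := by
  by_contra! hbad
  obtain ⟨g, hlt | hnlt⟩ := exists_increasing_or_nonincreasing_subseq (· < ·) f
  · exact hchain ⟨f ∘ g, fun n => hf _, fun i j hij => hlt i j hij⟩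
  · refine hanti ⟨f ∘ g, fun n => hf _, fun i j hij hle => ?_⟩
    rcases hij.lt_or_gt with hij | hji
    · exact hbad (g i) (g j) (g.strictMono hij) (not_lt_iff_le_imp_ge.mp (hnlt i j hij) hle)
    · exact hbad (g j) (g i) (g.strictMono hji) hle

/-- For an FESS `𝓛`: `𝓛` has no infinite `⊆`-antichain iff `(𝓛, ⊇)` is a WQO. -/
theorem fess_nia_iff_wqo {T : Type*} (𝓛 : Set (Set T))
    (hfess : ¬ ∃ (t : ℕ → T) (A : ℕ → Set T),
      ∀ i, A i ∈ 𝓛 ∧ (∀ j ≤ i, t j ∈ A i) ∧ t (i + 1) ∉ A i) :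
    (¬ ∃ f : ℕ → Set T, (∀ n, f n ∈ 𝓛) ∧ ∀ i j, i ≠ j → ¬ f i ⊆ f j) ↔
      ∀ f : ℕ → Set T, (∀ n, f n ∈ 𝓛) → ∃ i j, i < j ∧ f j ⊆ f i := by
  have hchain : ¬ ∃ L : ℕ → Set T, (∀ n, L n ∈ 𝓛) ∧ StrictMono L := fun ⟨L, hL𝓛, hL⟩ =>
    let ⟨t, ht⟩ := exists_isBadLearningSeq_of_strictMono hL𝓛 hL
    hfess ⟨t, _, ht⟩
  refine ⟨exists_lt_and_le_of_not_exists_strictMono_of_not_exists_antichain hchain, ?_⟩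
  rintro hwqo ⟨f, hf𝓛, hanti⟩
  obtain ⟨i, j, hij, hji⟩ := hwqo f hf𝓛
  exact hanti j i hij.ne' hji
end
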